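/- Upper bound on modified volume via slicing: for any feasible axis-parallel packing of 3D boxes into a strip [0,1]×[0,1]×[0,H] (no rotations, no overlap), the total modified volume Σ_R f_k(l(R))·g(w(R))·h(R) is at most T_k · H, where f_k/T_k and g are dual feasible functions. -/

import Mathlib

/-- The sequence from the Harmonic algorithm: `t 1 = 1`, `t (i+1) = t i * (t i + 1)`. -/
def tSeq : ℕ → ℕ
  | 0 => 1
  | 1 => 1
  | (n + 2) => tSeq (n + 1) * (tSeq (n + 1) + 1)

/-- The harmonic weighting function `f_k`. -/
noncomputable def fHarm (k : ℕ) (x : ℝ) : ℝ :=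
  if x ≤ 1 / k then k * x / ((k : ℝ) - 1) else 1 / (⌊1 / x⌋ : ℝ)

/-- The harmonic constant `T_k`, where `m` satisfies `t_m < k ≤ t_{m+1}`. -/
noncomputable def TkVal (k m : ℕ) : ℝ :=
  (∑ i ∈ Finset.Icc 1 m, (1 : ℝ) / (tSeq i : ℝ)) +
    (1 / (tSeq (m + 1) : ℝ)) * ((k : ℝ) / ((k : ℝ) - 1))

/-- A dual feasible function maps `[0,1]` to `[0,1]` and satisfies `Σ f (x i) ≤ 1`
whenever the `x i` lie in `[0,1]` and `Σ x i ≤ 1`. -/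
def DualFeasible (f : ℝ → ℝ) : Prop :=
  (∀ x ∈ Set.Icc (0 : ℝ) 1, f x ∈ Set.Icc (0 : ℝ) 1) ∧
  ∀ (n : ℕ) (x : Fin n → ℝ), (∀ i, x i ∈ Set.Icc (0 : ℝ) 1) → (∑ i, x i) ≤ 1 →
    (∑ i, f (x i)) ≤ 1

/-!
Slice the strip at every height `t`: the boxes crossing `t` form a packing of rectangles in the
unit square, so it suffices to prove `∑ (f_k(l)/T_k) g(w) ≤ 1` for such packings and to
integrate over `t`. A horizontal line meets the rectangles in disjoint intervals, so the weights
`f_k(l)/T_k` of the rectangles it crosses sum to at most `1`; it then remains to see that intervals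
of `[0,1]` whose weights sum to at most `1` at every point satisfy `∑ v g(w) ≤ 1`. For integer
weights this follows by colouring an interval family of depth `K` with `K` colours, each colour
class consisting of disjoint intervals; general weights are rounded to multiples of `1/D`.
That `f_k/T_k` is dual feasible is the greedy bound: an item of size in `(1/(t_j+1), 1/t_j]` has
weight `1/t_j` and leaves room `1/t_j - 1/(t_j+1) = 1/t_{j+1}` for the others.
-/

open Set MeasureTheory Filter Topology
open scoped Finset

variable {ι : Type*}

theorem tSeq_pos : ∀ n, 0 < tSeq n
  | 0 | 1 => Nat.one_pos
  | n + 2 => Nat.mul_pos (tSeq_pos (n + 1)) (Nat.succ_pos _)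

theorem tSeq_succ {n : ℕ} (hn : n ≠ 0) : tSeq (n + 1) = tSeq n * (tSeq n + 1) := by
  obtain ⟨n, rfl⟩ := Nat.exists_eq_succ_of_ne_zero hn
  rfl

theorem tSeq_monotone : Monotone tSeq := by
  refine monotone_nat_of_le_succ fun n => ?_
  rcases eq_or_ne n 0 with rfl | hn
  · exact le_rfl
  · rw [tSeq_succ hn]
    exact Nat.le_mul_of_pos_right _ (Nat.succ_pos _)

theorem one_div_tSeq_succ {n : ℕ} (hn : n ≠ 0) :
    (1 : ℝ) / tSeq (n + 1) = 1 / tSeq n - 1 / (tSeq n + 1) := by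
  have : (tSeq n : ℝ) ≠ 0 := Nat.cast_ne_zero.2 (tSeq_pos n).ne'
  rw [tSeq_succ hn]
  push_cast
  field_simp
  ring

theorem fHarm_nonneg (k : ℕ) {x : ℝ} (hx : 0 ≤ x) : 0 ≤ fHarm k x := by
  unfold fHarm
  split_ifs
  · rcases Nat.eq_zero_or_pos k with rfl | hk
    · simp
    · exact div_nonneg (by positivity) (sub_nonneg.2 (Nat.one_le_cast.2 hk))
  · exact one_div_nonneg.2 (Int.cast_nonneg (Int.floor_nonneg.2 (by positivity)))

theorem fHarm_of_le {k : ℕ} {x : ℝ} (hx : x ≤ 1 / k) : fHarm k x = k / (k - 1) * x := by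
  rw [fHarm, if_pos hx]
  ring

theorem fHarm_eq_one_div {k p : ℕ} (hp : 0 < p) (hpk : p < k) {x : ℝ}
    (hx₁ : 1 / (p + 1) < x) (hx₂ : x ≤ 1 / p) : fHarm k x = 1 / p := by
  have hx₀ : 0 < x := lt_trans (by positivity) hx₁
  have hp' : (0 : ℝ) < p := by exact_mod_cast hp
  have hkx : ¬ x ≤ 1 / k := fun h => hx₁.not_ge <| h.trans <|
    one_div_le_one_div_of_le (by positivity) (by exact_mod_cast hpk)
  have hfloor : ⌊1 / x⌋ = (p : ℤ) := Int.floor_eq_iff.2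
    ⟨by exact_mod_cast (le_one_div hx₀ hp').1 hx₂,
      by exact_mod_cast (one_div_lt (by positivity) hx₀).1 hx₁⟩
  rw [fHarm, if_neg hkx, hfloor, Int.cast_natCast]

theorem fHarm_le_mul {k p : ℕ} (hp : 0 < p) (hpk : p < k) {x : ℝ} (hx₀ : 0 ≤ x)
    (hx : x ≤ 1 / p) : fHarm k x ≤ (1 + 1 / p) * x := by
  have hp' : (0 : ℝ) < p := by exact_mod_cast hp
  by_cases hxk : x ≤ 1 / k
  · have hkp : (p : ℝ) ≤ k - 1 := by
      rw [le_sub_iff_add_le]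
      exact_mod_cast hpk
    have hk1 : (k : ℝ) - 1 ≠ 0 := by linarith
    rw [fHarm_of_le hxk, show (k : ℝ) / (k - 1) = 1 + 1 / (k - 1) by field_simp; ring]
    gcongr
  · have hxpos : 0 < x := lt_of_not_ge fun h => hxk (h.trans (by positivity))
    have hpq : (p : ℝ) ≤ ⌊1 / x⌋ := by
      exact_mod_cast Int.le_floor.2 (by exact_mod_cast (le_one_div hxpos hp').1 hx)
    set q : ℝ := ((⌊1 / x⌋ : ℤ) : ℝ)
    have hq : 0 < q := hp'.trans_le hpq
    have hxq : 1 ≤ (q + 1) * x := by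
      have := Int.lt_floor_add_one (1 / x)
      rw [div_lt_iff₀ hxpos] at this
      linarith
    rw [fHarm, if_neg hxk]
    calc 1 / q ≤ (1 + 1 / q) * x := by
          rw [div_le_iff₀ hq]
          calc (1 : ℝ) ≤ (q + 1) * x := hxq
            _ = (1 + 1 / q) * x * q := by field_simp
      _ ≤ (1 + 1 / p) * x := by gcongr

theorem sum_fHarm_le_mul_sum {k p : ℕ} (hp : 0 < p) (hpk : p < k) (s : Finset ι) {x : ι → ℝ}
    (hx : ∀ i ∈ s, 0 ≤ x i ∧ x i ≤ 1 / p) :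
    ∑ i ∈ s, fHarm k (x i) ≤ (1 + 1 / p) * ∑ i ∈ s, x i := by
  rw [Finset.mul_sum]
  exact Finset.sum_le_sum fun i hi => fHarm_le_mul hp hpk (hx i hi).1 (hx i hi).2

-- `TkVal k m` without its first `j - 1` terms, so that `harmonicTail k m 1 = TkVal k m`.
noncomputable def harmonicTail (k m j : ℕ) : ℝ :=
  (∑ i ∈ Finset.Icc j m, (1 : ℝ) / (tSeq i : ℝ)) +
    (1 / (tSeq (m + 1) : ℝ)) * ((k : ℝ) / ((k : ℝ) - 1))

section Harmonic

variable {k m j : ℕ}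

theorem harmonicTail_of_le (h : j ≤ m) :
    harmonicTail k m j = 1 / tSeq j + harmonicTail k m (j + 1) := by
  rw [harmonicTail, harmonicTail, ← Finset.sum_Ioc_add_eq_sum_Icc h,
    ← Finset.Icc_add_one_left_eq_Ioc]
  ring

theorem harmonicTail_succ_self :
    harmonicTail k m (m + 1) = 1 / tSeq (m + 1) * (k / (k - 1)) := by
  simp [harmonicTail]

theorem one_le_div_sub_one (hk : 2 ≤ k) : (1 : ℝ) ≤ k / (k - 1) := by
  have : (2 : ℝ) ≤ k := by exact_mod_cast hk
  rw [le_div_iff₀ (by linarith)]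
  linarith

theorem one_div_tSeq_le_harmonicTail (hk : 2 ≤ k) (h : j ≤ m + 1) :
    1 / (tSeq j : ℝ) ≤ harmonicTail k m j := by
  have hk' := one_le_div_sub_one hk
  have ht : ∀ n, (0 : ℝ) < 1 / tSeq n := fun n => one_div_pos.2 (Nat.cast_pos.2 (tSeq_pos n))
  rw [harmonicTail]
  rcases h.lt_or_eq with h | rfl
  · exact le_add_of_le_of_nonneg
      (Finset.single_le_sum (fun i _ => (ht i).le) (Finset.mem_Icc.2 ⟨le_rfl, by omega⟩))
      (mul_nonneg (ht _).le (zero_le_one.trans hk'))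
  · simp only [Finset.Icc_eq_empty (Nat.lt_succ_self m).not_ge, Finset.sum_empty, zero_add]
    exact le_mul_of_one_le_right (ht _).le hk'

theorem sum_fHarm_le_harmonicTail_of_forall_le (hk : 2 ≤ k) (hm : tSeq m < k) (hj : j ≠ 0)
    (hjm : j ≤ m) (s : Finset ι) {x : ι → ℝ} (hx : ∀ i ∈ s, 0 ≤ x i ∧ x i ≤ 1 / (tSeq j + 1))
    (hs : ∑ i ∈ s, x i ≤ 1 / tSeq j) :
    ∑ i ∈ s, fHarm k (x i) ≤ harmonicTail k m j := by
  have ht : 0 < tSeq j := tSeq_pos j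
  have htk : tSeq j < k := (tSeq_monotone hjm).trans_lt hm
  rcases (Nat.succ_le_of_lt htk).lt_or_eq with htk' | htk'
  · calc ∑ i ∈ s, fHarm k (x i)
        ≤ (1 + 1 / (tSeq j + 1 : ℕ)) * ∑ i ∈ s, x i :=
          sum_fHarm_le_mul_sum (Nat.succ_pos _) htk' s fun i hi => by exact_mod_cast hx i hi
      _ ≤ (1 + 1 / (tSeq j + 1 : ℕ)) * (1 / tSeq j) := by gcongr
      _ = 1 / tSeq j + 1 / tSeq (j + 1) := by
          rw [one_div_tSeq_succ hj]
          push_cast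
          field_simp
          ring
      _ ≤ harmonicTail k m j := by
          rw [harmonicTail_of_le hjm]
          gcongr
          exact one_div_tSeq_le_harmonicTail hk (by omega)
  · -- `k = tSeq j + 1 ≤ tSeq (j + 1)` and `tSeq m < k` force `j = m`
    obtain rfl : j = m := by
      by_contra hne
      have := tSeq_monotone (show j + 1 ≤ m by omega)
      rw [tSeq_succ hj] at this
      nlinarith
    calc ∑ i ∈ s, fHarm k (x i)
        ≤ (1 + 1 / tSeq j) * ∑ i ∈ s, x i :=
          sum_fHarm_le_mul_sum ht htk s fun i hi => ⟨(hx i hi).1, (hx i hi).2.trans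
            (one_div_le_one_div_of_le (Nat.cast_pos.2 ht) (by linarith))⟩
      _ ≤ (1 + 1 / tSeq j) * (1 / tSeq j) := by gcongr
      _ = harmonicTail k j j := by
          rw [harmonicTail_of_le le_rfl, harmonicTail_succ_self, tSeq_succ hj, ← htk']
          push_cast
          rw [add_sub_cancel_right]
          field_simp

theorem sum_fHarm_le_harmonicTail (hk : 2 ≤ k) (hm₁ : tSeq m < k) (hm₂ : k ≤ tSeq (m + 1))
    (hj : j ≠ 0) (hjm : j ≤ m + 1) (s : Finset ι) {x : ι → ℝ} (hx : ∀ i ∈ s, 0 ≤ x i)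
    (hs : ∑ i ∈ s, x i ≤ 1 / tSeq j) :
    ∑ i ∈ s, fHarm k (x i) ≤ harmonicTail k m j := by
  classical
  induction hjm using Nat.decreasingInduction generalizing s with
  | self =>
    have hxk : ∀ i ∈ s, x i ≤ 1 / k := fun i hi =>
      ((Finset.single_le_sum hx hi).trans hs).trans
        (one_div_le_one_div_of_le (by positivity) (by exact_mod_cast hm₂))
    rw [Finset.sum_congr rfl fun i hi => fHarm_of_le (hxk i hi), ← Finset.mul_sum,
      harmonicTail_succ_self, mul_comm]
    gcongr
    exact zero_le_one.trans (one_le_div_sub_one hk)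
  | of_succ j hjm ih =>
    by_cases hbig : ∃ i₀ ∈ s, 1 / (tSeq j + 1 : ℝ) < x i₀
    · obtain ⟨i₀, hi₀, hlt⟩ := hbig
      have hf : fHarm k (x i₀) = 1 / tSeq j := fHarm_eq_one_div (tSeq_pos j)
        ((tSeq_monotone (Nat.lt_succ_iff.1 hjm)).trans_lt hm₁) (by exact_mod_cast hlt)
        ((Finset.single_le_sum hx hi₀).trans hs)
      have hrest : ∑ i ∈ s.erase i₀, x i ≤ 1 / tSeq (j + 1) := by
        rw [Finset.sum_erase_eq_sub hi₀, one_div_tSeq_succ hj]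
        linarith
      rw [← Finset.add_sum_erase s _ hi₀, hf, harmonicTail_of_le (Nat.lt_succ_iff.1 hjm)]
      gcongr
      exact ih (Nat.succ_ne_zero j) _ (fun i hi => hx i (Finset.mem_of_mem_erase hi)) hrest
    · exact sum_fHarm_le_harmonicTail_of_forall_le hk hm₁ hj (Nat.lt_succ_iff.1 hjm) s
        (fun i hi => ⟨hx i hi, not_lt.1 fun h => hbig ⟨i, hi, h⟩⟩) hs

theorem sum_fHarm_le_TkVal (hk : 2 ≤ k) (hm₁ : tSeq m < k) (hm₂ : k ≤ tSeq (m + 1))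
    (s : Finset ι) {x : ι → ℝ} (hx : ∀ i ∈ s, 0 ≤ x i) (hs : ∑ i ∈ s, x i ≤ 1) :
    ∑ i ∈ s, fHarm k (x i) ≤ TkVal k m :=
  sum_fHarm_le_harmonicTail hk hm₁ hm₂ one_ne_zero (Nat.le_add_left 1 m) s hx
    (by simpa [tSeq] using hs)

theorem one_le_TkVal (hk : 2 ≤ k) : 1 ≤ TkVal k m := by
  have := one_div_tSeq_le_harmonicTail (m := m) hk (Nat.le_add_left 1 m)
  rwa [show tSeq 1 = 1 from rfl, Nat.cast_one, div_one] at this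

theorem dualFeasible_fHarm_div_TkVal (hk : 2 ≤ k) (hm₁ : tSeq m < k)
    (hm₂ : k ≤ tSeq (m + 1)) : DualFeasible fun x => fHarm k x / TkVal k m := by
  have hT : 0 < TkVal k m := zero_lt_one.trans_le (one_le_TkVal hk)
  refine ⟨fun x hx => ⟨div_nonneg (fHarm_nonneg k hx.1) hT.le, (div_le_one hT).2 ?_⟩,
    fun n x hx hs => ?_⟩
  · simpa using sum_fHarm_le_TkVal hk hm₁ hm₂ {x} (x := id) (by simpa using hx.1)
      (by simpa using hx.2)
  · rw [← Finset.sum_div, div_le_one hT]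
    exact sum_fHarm_le_TkVal hk hm₁ hm₂ Finset.univ (fun i _ => (hx i).1) hs

end Harmonic

theorem sum_mul_le_mul_of_forall_sum_filter_le (s : Finset ι) {a ℓ u : ι → ℝ} {c H : ℝ}
    (hH : 0 ≤ H) (hℓ : ∀ i ∈ s, 0 ≤ ℓ i)
    (hsub : ∀ i ∈ s, 0 ≤ a i ∧ a i + ℓ i ≤ H)
    (hdepth : ∀ t, ∑ i ∈ s with t ∈ Ioo (a i) (a i + ℓ i), u i ≤ c) :
    ∑ i ∈ s, u i * ℓ i ≤ c * H := by
  classical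
  set F : ι → ℝ → ℝ := fun i => (Ioo (a i) (a i + ℓ i)).indicator fun _ => u i
  have hF : ∀ i, Integrable (F i) := fun i =>
    (integrable_indicator_iff measurableSet_Ioo).2 (integrableOn_const (by simp))
  have hpoint : ∀ t, ∑ i ∈ s, F i t ≤ (Icc 0 H).indicator (fun _ => c) t := by
    intro t
    by_cases ht : t ∈ Icc 0 H
    · simpa only [indicator_of_mem ht, F, Finset.sum_filter, indicator_apply] using hdepth t
    · refine (Finset.sum_eq_zero fun i hi => indicator_of_notMem (fun hti => ht ?_) _).trans_le
        (indicator_of_notMem ht _).ge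
      exact ⟨(hsub i hi).1.trans hti.1.le, hti.2.le.trans (hsub i hi).2⟩
  calc ∑ i ∈ s, u i * ℓ i = ∑ i ∈ s, ∫ t, F i t := by
        refine Finset.sum_congr rfl fun i hi => ?_
        rw [integral_indicator_const _ measurableSet_Ioo, Real.volume_real_Ioo_of_le
          (le_add_of_nonneg_right (hℓ i hi)), add_sub_cancel_left, smul_eq_mul, mul_comm]
    _ = ∫ t, ∑ i ∈ s, F i t := (integral_finsetSum s fun i _ => hF i).symm
    _ ≤ ∫ t, (Icc 0 H).indicator (fun _ => c) t :=
        integral_mono (integrable_finsetSum s fun i _ => hF i)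
          ((integrable_indicator_iff measurableSet_Icc).2 (integrableOn_const (by simp))) hpoint
    _ = c * H := by
        rw [integral_indicator_const _ measurableSet_Icc, Real.volume_real_Icc_of_le hH, sub_zero,
          smul_eq_mul, mul_comm]

theorem sum_le_of_pairwiseDisjoint_Ioo (s : Finset ι) {a ℓ : ι → ℝ} {H : ℝ} (hH : 0 ≤ H)
    (hℓ : ∀ i ∈ s, 0 ≤ ℓ i) (hsub : ∀ i ∈ s, 0 ≤ a i ∧ a i + ℓ i ≤ H)
    (hd : (s : Set ι).PairwiseDisjoint fun i => Ioo (a i) (a i + ℓ i)) :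
    ∑ i ∈ s, ℓ i ≤ H := by
  have hvol : volume (⋃ i ∈ s, Ioo (a i) (a i + ℓ i)) ≤ volume (Icc 0 H) :=
    measure_mono <| iUnion₂_subset fun i hi => Ioo_subset_Icc_self.trans
      (Icc_subset_Icc (hsub i hi).1 (hsub i hi).2)
  rw [measure_biUnion_finset hd fun i _ => measurableSet_Ioo, Real.volume_Icc, sub_zero] at hvol
  simp_rw [Real.volume_Ioo, add_sub_cancel_left] at hvol
  rwa [← ENNReal.ofReal_sum_of_nonneg hℓ, ENNReal.ofReal_le_ofReal_iff hH] at hvol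

theorem exists_coloring_of_forall_card_filter_le (K : ℕ) (s : Finset ι) {a ℓ : ι → ℝ}
    (hℓ : ∀ i ∈ s, 0 < ℓ i) (hdepth : ∀ t, #{i ∈ s | t ∈ Ioo (a i) (a i + ℓ i)} ≤ K) :
    ∃ c : ι → ℕ, (∀ i ∈ s, c i < K) ∧
      ∀ v, (↑{i ∈ s | c i = v} : Set ι).PairwiseDisjoint fun i => Ioo (a i) (a i + ℓ i) := by
  classical
  induction s using Finset.induction_on_max_value a with
  | empty => exact ⟨0, by simp, by simp⟩
  | insert i₀ s hi₀ hmax ih =>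
    obtain ⟨c, hcK, hc⟩ := ih (fun i hi => hℓ i (Finset.mem_insert_of_mem hi)) fun t =>
      (Finset.card_le_card (Finset.filter_subset_filter _ (Finset.subset_insert i₀ s))).trans
        (hdepth t)
    set N := {j ∈ s | a i₀ < a j + ℓ j}
    have hN : ∀ j ∈ insert i₀ N, a j ≤ a i₀ ∧ a i₀ < a j + ℓ j := by
      simp only [Finset.mem_insert, N, Finset.mem_filter]
      rintro j (rfl | ⟨hj, hlt⟩)
      · exact ⟨le_rfl, lt_add_of_pos_right _ (hℓ j (Finset.mem_insert_self j s))⟩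
      · exact ⟨hmax j hj, hlt⟩
    -- all intervals meeting the last one contain the points just to the right of `a i₀`
    obtain ⟨t, ht⟩ : ∃ t, ∀ j ∈ insert i₀ N, t ∈ Ioo (a j) (a j + ℓ j) := by
      refine (Filter.eventually_all_finset _ |>.2 fun j hj => ?_).exists (f := 𝓝[>] a i₀)
      filter_upwards [Ioo_mem_nhdsGT (hN j hj).2] with t ht
      exact ⟨(hN j hj).1.trans_lt ht.1, ht.2⟩
    have hcard : #N < #(Finset.range K) := by
      have hsub : insert i₀ N ⊆ {i ∈ insert i₀ s | t ∈ Ioo (a i) (a i + ℓ i)} := fun j hj =>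
        Finset.mem_filter.2 ⟨Finset.insert_subset_insert i₀ (Finset.filter_subset _ s) hj, ht j hj⟩
      have := (Finset.card_le_card hsub).trans (hdepth t)
      rw [Finset.card_insert_of_notMem fun h => hi₀ (Finset.mem_filter.1 h).1] at this
      rwa [Finset.card_range]
    obtain ⟨v, hvK, hvN⟩ :=
      Finset.exists_mem_notMem_of_card_lt_card (Finset.card_image_le.trans_lt hcard)
    have hupd : ∀ j ∈ s, Function.update c i₀ v j = c j := fun j hj =>
      Function.update_of_ne (ne_of_mem_of_not_mem hj hi₀) _ _
    refine ⟨Function.update c i₀ v, ?_, fun w => ?_⟩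
    · simp only [Finset.forall_mem_insert, Function.update_self]
      exact ⟨Finset.mem_range.1 hvK, fun j hj => (hupd j hj).symm ▸ hcK j hj⟩
    rw [Finset.filter_insert, Finset.filter_congr fun j hj => by rw [hupd j hj],
      Function.update_self]
    split_ifs with hw
    · subst hw
      rw [Finset.coe_insert]
      refine (hc v).insert fun j hj _ => Ioo_disjoint_Ioo.2 ?_
      have hj' := Finset.mem_filter.1 hj
      have : a j + ℓ j ≤ a i₀ := not_lt.1 fun hlt =>
        hvN (Finset.mem_image.2 ⟨j, Finset.mem_filter.2 ⟨hj'.1, hlt⟩, hj'.2⟩)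
      exact (min_le_right _ _).trans (this.trans (le_max_left _ _))
    · exact hc w

namespace DualFeasible

variable {f g : ℝ → ℝ}

theorem sum_le_one (hg : DualFeasible g) (s : Finset ι) {x : ι → ℝ}
    (hx : ∀ i ∈ s, x i ∈ Icc 0 1) (hs : ∑ i ∈ s, x i ≤ 1) : ∑ i ∈ s, g (x i) ≤ 1 := by
  have hfin : ∀ F : ι → ℝ, ∑ i ∈ s, F i = ∑ j, F (s.equivFin.symm j) := fun F => by
    rw [← s.sum_coe_sort]
    exact (s.equivFin.symm.sum_comp _).symm
  rw [hfin] at hs ⊢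
  exact hg.2 _ _ (fun j => hx _ (s.equivFin.symm j).2) hs

theorem sum_le_of_forall_card_filter_le (hg : DualFeasible g) (K : ℕ) (s : Finset ι)
    {a ℓ : ι → ℝ} (hℓ : ∀ i ∈ s, 0 < ℓ i) (hsub : ∀ i ∈ s, 0 ≤ a i ∧ a i + ℓ i ≤ 1)
    (hdepth : ∀ t, #{i ∈ s | t ∈ Ioo (a i) (a i + ℓ i)} ≤ K) :
    ∑ i ∈ s, g (ℓ i) ≤ K := by
  classical
  obtain ⟨c, hcK, hc⟩ := exists_coloring_of_forall_card_filter_le K s hℓ hdepth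
  have hclass : ∀ v, ∑ i ∈ s with c i = v, g (ℓ i) ≤ 1 := fun v => by
    have hsub' : ∀ i ∈ {i ∈ s | c i = v}, i ∈ s := fun i hi => (Finset.mem_filter.1 hi).1
    refine hg.sum_le_one _ (fun i hi => ⟨(hℓ i (hsub' i hi)).le, ?_⟩) ?_
    · linarith [hsub i (hsub' i hi)]
    · exact sum_le_of_pairwiseDisjoint_Ioo _ zero_le_one (fun i hi => (hℓ i (hsub' i hi)).le)
        (fun i hi => hsub i (hsub' i hi)) (hc v)
  calc ∑ i ∈ s, g (ℓ i)
      = ∑ v ∈ Finset.range K, ∑ i ∈ s with c i = v, g (ℓ i) :=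
        (Finset.sum_fiberwise_of_maps_to (fun i hi => Finset.mem_range.2 (hcK i hi)) _).symm
    _ ≤ ∑ _v ∈ Finset.range K, (1 : ℝ) := Finset.sum_le_sum fun v _ => hclass v
    _ = K := by simp

theorem sum_natCast_mul_le_of_forall_sum_filter_le (hg : DualFeasible g) (K : ℕ)
    (s : Finset ι) {a ℓ : ι → ℝ} (n : ι → ℕ) (hℓ : ∀ i ∈ s, 0 < ℓ i)
    (hsub : ∀ i ∈ s, 0 ≤ a i ∧ a i + ℓ i ≤ 1)
    (hdepth : ∀ t, ∑ i ∈ s with t ∈ Ioo (a i) (a i + ℓ i), n i ≤ K) :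
    ∑ i ∈ s, (n i : ℝ) * g (ℓ i) ≤ K := by
  classical
  -- replace interval `i` by `n i` copies of it
  have key := hg.sum_le_of_forall_card_filter_le K (s.sigma fun i => Finset.range (n i))
    (a := fun p => a p.1) (ℓ := fun p => ℓ p.1) (fun p hp => hℓ p.1 (Finset.mem_sigma.1 hp).1)
    (fun p hp => hsub p.1 (Finset.mem_sigma.1 hp).1) fun t => by
      simpa [Finset.filter_sigma, Finset.card_sigma, Finset.filter_const, apply_ite,
        Finset.sum_filter] using hdepth t
  simpa [Finset.sum_sigma, nsmul_eq_mul] using key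

theorem sum_mul_le_of_forall_sum_filter_le (hg : DualFeasible g) (s : Finset ι)
    {a ℓ v : ι → ℝ} {c : ℝ} (hv : ∀ i ∈ s, 0 ≤ v i) (hℓ : ∀ i ∈ s, 0 < ℓ i)
    (hsub : ∀ i ∈ s, 0 ≤ a i ∧ a i + ℓ i ≤ 1)
    (hdepth : ∀ t, ∑ i ∈ s with t ∈ Ioo (a i) (a i + ℓ i), v i ≤ c) :
    ∑ i ∈ s, v i * g (ℓ i) ≤ c := by
  have hc : 0 ≤ c := by
    have h := hdepth (-1)
    rwa [Finset.filter_false_of_mem fun i hi hi' => by linarith [hi'.1, (hsub i hi).1],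
      Finset.sum_empty] at h
  have hg01 : ∀ i ∈ s, g (ℓ i) ∈ Icc 0 1 := fun i hi =>
    hg.1 _ ⟨(hℓ i hi).le, by linarith [hsub i hi]⟩
  -- round the weights down to multiples of `1 / D`
  have happrox : ∀ D : ℕ, 0 < D → ∑ i ∈ s, v i * g (ℓ i) ≤ c + #s / D := by
    intro D hD
    have hD' : (0 : ℝ) < D := Nat.cast_pos.2 hD
    have hK := hg.sum_natCast_mul_le_of_forall_sum_filter_le ⌊c * D⌋₊ s (fun i => ⌊v i * D⌋₊)
      hℓ hsub fun t => Nat.le_floor <| by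
        push_cast
        calc ∑ i ∈ s with t ∈ Ioo (a i) (a i + ℓ i), (⌊v i * D⌋₊ : ℝ)
            ≤ ∑ i ∈ s with t ∈ Ioo (a i) (a i + ℓ i), v i * D :=
              Finset.sum_le_sum fun i hi =>
                Nat.floor_le (mul_nonneg (hv i (Finset.mem_filter.1 hi).1) hD'.le)
          _ ≤ c * D := by
              rw [← Finset.sum_mul]
              exact mul_le_mul_of_nonneg_right (hdepth t) hD'.le
    have hcard : ∑ i ∈ s, g (ℓ i) ≤ #s := by
      simpa using Finset.sum_le_card_nsmul s _ 1 fun i hi => (hg01 i hi).2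
    calc ∑ i ∈ s, v i * g (ℓ i)
        ≤ ∑ i ∈ s, (⌊v i * D⌋₊ + 1) / D * g (ℓ i) :=
          Finset.sum_le_sum fun i hi => mul_le_mul_of_nonneg_right
            ((le_div_iff₀ hD').2 (Nat.lt_floor_add_one _).le) (hg01 i hi).1
      _ = (∑ i ∈ s, (⌊v i * D⌋₊ : ℝ) * g (ℓ i) + ∑ i ∈ s, g (ℓ i)) / D := by
          rw [← Finset.sum_add_distrib, Finset.sum_div]
          exact Finset.sum_congr rfl fun i _ => by ring
      _ ≤ (c * D + #s) / D := by
          gcongr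
          exact hK.trans (Nat.floor_le (by positivity))
      _ = c + #s / D := by field_simp
  refine ge_of_tendsto ?_ (Filter.eventually_atTop.2 ⟨1, fun D hD => happrox D hD⟩)
  simpa using tendsto_const_nhds.add (tendsto_const_div_atTop_nhds_zero_nat (#s : ℝ))


theorem sum_mul_le_one_of_pairwiseDisjoint (hf : DualFeasible f) (hg : DualFeasible g)
    (s : Finset ι) {x y l w : ι → ℝ} (hl : ∀ i ∈ s, 0 ≤ l i) (hw : ∀ i ∈ s, 0 < w i)
    (hx : ∀ i ∈ s, 0 ≤ x i ∧ x i + l i ≤ 1) (hy : ∀ i ∈ s, 0 ≤ y i ∧ y i + w i ≤ 1)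
    (hd : (s : Set ι).PairwiseDisjoint fun i => Ioo (x i) (x i + l i) ×ˢ Ioo (y i) (y i + w i)) :
    ∑ i ∈ s, f (l i) * g (w i) ≤ 1 := by
  have hl₁ : ∀ i ∈ s, l i ∈ Icc 0 1 := fun i hi => ⟨hl i hi, by linarith [hx i hi]⟩
  refine hg.sum_mul_le_of_forall_sum_filter_le s (fun i hi => (hf.1 _ (hl₁ i hi)).1) hw hy
    fun t => ?_
  set s' := {i ∈ s | t ∈ Ioo (y i) (y i + w i)}
  have hs' : ∀ i ∈ s', i ∈ s := fun i hi => (Finset.mem_filter.1 hi).1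
  have hd' : (s' : Set ι).PairwiseDisjoint fun i => Ioo (x i) (x i + l i) := by
    intro i hi j hj hij
    have hi' := Finset.mem_filter.1 hi
    have hj' := Finset.mem_filter.1 hj
    refine ((hd hi'.1 hj'.1 hij).preimage fun p => (p, t)).mono ?_ ?_
    · exact fun p hp => ⟨hp, hi'.2⟩
    · exact fun p hp => ⟨hp, hj'.2⟩
  exact hf.sum_le_one s' (fun i hi => hl₁ i (hs' i hi)) <| sum_le_of_pairwiseDisjoint_Ioo s'
    zero_le_one (fun i hi => hl i (hs' i hi)) (fun i hi => hx i (hs' i hi)) hd'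

theorem sum_mul_mul_le_of_pairwiseDisjoint (hf : DualFeasible f) (hg : DualFeasible g)
    (s : Finset ι) {x y z l w h : ι → ℝ} {H : ℝ} (hH : 0 ≤ H) (hl : ∀ i ∈ s, 0 ≤ l i)
    (hw : ∀ i ∈ s, 0 < w i) (hh : ∀ i ∈ s, 0 ≤ h i) (hx : ∀ i ∈ s, 0 ≤ x i ∧ x i + l i ≤ 1)
    (hy : ∀ i ∈ s, 0 ≤ y i ∧ y i + w i ≤ 1) (hz : ∀ i ∈ s, 0 ≤ z i ∧ z i + h i ≤ H)
    (hd : (s : Set ι).PairwiseDisjoint fun i =>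
      Ioo (x i) (x i + l i) ×ˢ Ioo (y i) (y i + w i) ×ˢ Ioo (z i) (z i + h i)) :
    ∑ i ∈ s, f (l i) * g (w i) * h i ≤ H := by
  refine (sum_mul_le_mul_of_forall_sum_filter_le s hH hh hz fun t => ?_).trans_eq (one_mul H)
  set s' := {i ∈ s | t ∈ Ioo (z i) (z i + h i)}
  have hs' : ∀ i ∈ s', i ∈ s := fun i hi => (Finset.mem_filter.1 hi).1
  have hd' : (s' : Set ι).PairwiseDisjoint fun i =>
      Ioo (x i) (x i + l i) ×ˢ Ioo (y i) (y i + w i) := by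
    intro i hi j hj hij
    have hi' := Finset.mem_filter.1 hi
    have hj' := Finset.mem_filter.1 hj
    refine ((hd hi'.1 hj'.1 hij).preimage fun p : ℝ × ℝ => (p.1, p.2, t)).mono ?_ ?_
    · exact fun p hp => ⟨hp.1, hp.2, hi'.2⟩
    · exact fun p hp => ⟨hp.1, hp.2, hj'.2⟩
  exact hf.sum_mul_le_one_of_pairwiseDisjoint hg s' (fun i hi => hl i (hs' i hi))
    (fun i hi => hw i (hs' i hi)) (fun i hi => hx i (hs' i hi)) (fun i hi => hy i (hs' i hi)) hd'

end DualFeasible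

/-- Upper bound on the modified volume via slicing: for any feasible axis-parallel
packing of 3D boxes into the strip `[0,1] × [0,1] × [0,H]`, the total modified volume
`Σ f_k(l R) * g(w R) * h R` is at most `T_k * H`, where `g` is dual feasible
(and `f_k / T_k` is dual feasible). -/
theorem modified_volume_upper_bound (k m : ℕ) (hk : 2 ≤ k)
    (hm1 : tSeq m < k) (hm2 : k ≤ tSeq (m + 1))
    (g : ℝ → ℝ) (hg : DualFeasible g)
    (n : ℕ) (l w h x y z : Fin n → ℝ) (H : ℝ) (hH : 0 ≤ H)
    (hside : ∀ i, 0 < l i ∧ l i ≤ 1 ∧ 0 < w i ∧ w i ≤ 1 ∧ 0 < h i ∧ h i ≤ 1)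
    (hin : ∀ i, 0 ≤ x i ∧ x i + l i ≤ 1 ∧ 0 ≤ y i ∧ y i + w i ≤ 1 ∧
      0 ≤ z i ∧ z i + h i ≤ H)
    (hdisj : ∀ i j, i ≠ j →
      (Set.Ioo (x i) (x i + l i) ×ˢ Set.Ioo (y i) (y i + w i) ×ˢ
          Set.Ioo (z i) (z i + h i)) ∩
        (Set.Ioo (x j) (x j + l j) ×ˢ Set.Ioo (y j) (y j + w j) ×ˢ
          Set.Ioo (z j) (z j + h j)) = ∅) :
    (∑ i, fHarm k (l i) * g (w i) * h i) ≤ TkVal k m * H := by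

  have hT : 0 < TkVal k m := zero_lt_one.trans_le (one_le_TkVal hk)
  have hbound := (dualFeasible_fHarm_div_TkVal hk hm1 hm2).sum_mul_mul_le_of_pairwiseDisjoint hg
    Finset.univ hH (fun i _ => (hside i).1.le) (fun i _ => (hside i).2.2.1)
    (fun i _ => (hside i).2.2.2.2.1.le) (fun i _ => ⟨(hin i).1, (hin i).2.1⟩)
    (fun i _ => ⟨(hin i).2.2.1, (hin i).2.2.2.1⟩) (fun i _ => (hin i).2.2.2.2)
    fun i _ j _ hij => Set.disjoint_iff_inter_eq_empty.2 (hdisj i j hij)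
  calc ∑ i, fHarm k (l i) * g (w i) * h i
      = TkVal k m * ∑ i, fHarm k (l i) / TkVal k m * g (w i) * h i := by
        rw [Finset.mul_sum]
        exact Finset.sum_congr rfl fun i _ => by field_simp
    _ ≤ TkVal k m * H := by gcongr
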